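/- Let f ∈ ℝ with |f| < 1. Then for every t ∈ (-1,1) and every k ∈ ℕ₀, the constant solution (â₁(t), â₂(t)) with ζ = ζ̂(t) = f²(1-t²) + t/√(1-t²) does not satisfy the kernel condition (ζ̂(t)+dk²)² - 4f²(1-t²)(ζ̂(t)+dk²) + 1 + 3f⁴(1-t²)² = 0; i.e., the curve Γ̂_f of constant solutions contains no bifurcation points. -/
import Mathlib

open Real

theorem stmt_18 (d f : ℝ) (hd : d ≠ 0) (hf : |f| < 1) :
    ∀ t ∈ Set.Ioo (-1 : ℝ) 1, ∀ k : ℕ,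
      (f ^ 2 * (1 - t ^ 2) + t / Real.sqrt (1 - t ^ 2) + d * (k : ℝ) ^ 2) ^ 2
        - 4 * (f ^ 2 * (1 - t ^ 2)) *
          (f ^ 2 * (1 - t ^ 2) + t / Real.sqrt (1 - t ^ 2) + d * (k : ℝ) ^ 2)
        + 1 + 3 * (f ^ 2 * (1 - t ^ 2)) ^ 2 ≠ 0 := by
  intro t ht k
  obtain ⟨ht1, ht2⟩ := ht
  have hf2 : f ^ 2 < 1 := by nlinarith [sq_abs f, abs_nonneg f]
  have ht' : 0 < 1 - t ^ 2 := by nlinarith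
  have hA : f ^ 2 * (1 - t ^ 2) < 1 := by nlinarith [sq_nonneg f]
  have hA0 : 0 ≤ f ^ 2 * (1 - t ^ 2) := by positivity
  set X := f ^ 2 * (1 - t ^ 2) + t / Real.sqrt (1 - t ^ 2) + d * (k : ℝ) ^ 2
  intro h
  nlinarith [sq_nonneg (X - 2 * (f ^ 2 * (1 - t ^ 2)))]
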